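/- arXiv:2305.00164 — 2 statements merged into one kernel-verified Lean document; each statement's English description precedes it below -/
import Mathlib

section
/- Let f be convex on [0,1] with unique minimizer Z(f) and minimum M(f), and suppose there exist constants 0 < c₁ ≤ c₂ < ∞ and k ≥ 1 such that c₁ |t − Z(f)|^k ≤ f(t) − M(f) ≤ c₂ |t − Z(f)|^k for all t in a neighborhood of Z(f). Then there exist positive constants A, B (depending on c₁, c₂, k) such that for all sufficiently small ε > 0: A ε^{2k/(2k+1)} ≤ ρ_m(ε; f) ≤ B ε^{2k/(2k+1)} and A ε^{2/(2k+1)} ≤ ρ_z(ε; f) ≤ B ε^{2/(2k+1)}. -/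
open MeasureTheory Set

/-- L2 distance between two functions on [0,1]. -/
noncomputable def L2 (f g : ℝ → ℝ) : ℝ :=
  Real.sqrt (∫ t in (0:ℝ)..1, (f t - g t) ^ 2)

/-- Truncation f_u(t) = max{f(t), u}. -/
def trunc (f : ℝ → ℝ) (u : ℝ) : ℝ → ℝ := fun t => max (f t) u

/-- z is the unique minimizer of f on [0,1]. -/
def UniqueMinOn (f : ℝ → ℝ) (z : ℝ) : Prop :=
  z ∈ Icc (0:ℝ) 1 ∧ ∀ t ∈ Icc (0:ℝ) 1, t ≠ z → f z < f t

/-- Water-filling depth ρ_m(ε; f), where Mf is the minimum of f. -/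
noncomputable def rhoM (ε : ℝ) (f : ℝ → ℝ) (Mf : ℝ) : ℝ :=
  sSup {v | ∃ u, v = u - Mf ∧ L2 f (trunc f u) ≤ ε}

/-- Water-filling width ρ_z(ε; f), where Zf is the minimizer and Mf the minimum of f. -/
noncomputable def rhoZ (ε : ℝ) (f : ℝ → ℝ) (Zf Mf : ℝ) : ℝ :=
  sSup {v | ∃ t ∈ Icc (0:ℝ) 1, v = |t - Zf| ∧ f t ≤ rhoM ε f Mf + Mf}

/-- Local modulus of continuity of the minimum. -/
noncomputable def omegaM (ε : ℝ) (f : ℝ → ℝ) (Mf : ℝ) : ℝ :=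
  sSup {v | ∃ g zg, ConvexOn ℝ (Icc (0:ℝ) 1) g ∧ UniqueMinOn g zg ∧
    L2 f g ≤ ε ∧ v = |Mf - g zg|}

/-- Local modulus of continuity of the minimizer. -/
noncomputable def omegaZ (ε : ℝ) (f : ℝ → ℝ) (Zf : ℝ) : ℝ :=
  sSup {v | ∃ g zg, ConvexOn ℝ (Icc (0:ℝ) 1) g ∧ UniqueMinOn g zg ∧
    L2 f g ≤ ε ∧ v = |Zf - zg|}

/-! Write `u = M(f) + v`. Then `‖f - f_u‖₂² = ∫ ((u - f)⁺)²`. Convexity extends the local lower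
bound to `f - M(f) ≥ c₁ min(|t - Z(f)|, δ)^k` on all of `[0,1]`, so for small `v` the sublevel set
`{f < u}` lies within `(v / c₁)^(1/k)` of `Z(f)`, while by the local upper bound `u - f ≥ v / 2` on
an interval of length `(v / (2 c₂))^(1/k)` beside `Z(f)`. Hence `‖f - f_u‖₂² ≍ v^(2 + 1/k)`, which
gives `ρ_m(ε) ≍ (ε²)^(k/(2k+1))`; the same two power bounds then give `ρ_z(ε) ≍ ρ_m(ε)^(1/k)`. -/

lemma ConvexOn.abs_sub_le_of_lt {s : Set ℝ} {f : ℝ → ℝ} {z t δ m : ℝ} (hf : ConvexOn ℝ s f)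
    (hz : z ∈ s) (ht : t ∈ s) (hδ : 0 ≤ δ) (hsphere : ∀ p ∈ s, |p - z| = δ → m ≤ f p)
    (hfz : f z < m) (hft : f t < m) : |t - z| ≤ δ := by
  by_contra! hδt
  obtain ⟨p, hp, hpz⟩ : ∃ p ∈ uIcc z t, |p - z| = δ := by
    rcases lt_abs.mp hδt with h | h
    · exact ⟨z + δ, mem_uIcc.2 (Or.inl ⟨by linarith, by linarith⟩), by simp [abs_of_nonneg hδ]⟩
    · exact ⟨z - δ, mem_uIcc.2 (Or.inr ⟨by linarith, by linarith⟩), by simp [abs_of_nonneg hδ]⟩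
  rw [← segment_eq_uIcc] at hp
  exact (max_lt hfz hft).not_ge
    ((hsphere p (hf.1.segment_subset hz ht hp) hpz).trans (hf.le_on_segment hz ht hp))

lemma exists_mem_Icc_abs_sub_eq {z r : ℝ} (hz : z ∈ Icc (0:ℝ) 1) (hr : 0 ≤ r) (hr' : r ≤ 1 / 2) :
    ∃ t ∈ Icc (0:ℝ) 1, |t - z| = r := by
  rcases le_total z (1 / 2) with h | h
  · exact ⟨z + r, ⟨by linarith [hz.1], by linarith⟩, by simp [abs_of_nonneg hr]⟩
  · exact ⟨z - r, ⟨by linarith, by linarith [hz.2]⟩, by simp [abs_of_nonneg hr]⟩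

lemma ConvexOn.aestronglyMeasurable_restrict_Ioc {f : ℝ → ℝ} {a b : ℝ}
    (hf : ConvexOn ℝ (Icc a b) f) : AEStronglyMeasurable f (volume.restrict (Ioc a b)) := by
  have hcont : ContinuousOn f (Ioo a b) :=
    (hf.subset Ioo_subset_Icc_self (convex_Ioo a b)).continuousOn isOpen_Ioo
  rw [← Measure.restrict_congr_set Ioo_ae_eq_Ioc]
  exact hcont.aestronglyMeasurable measurableSet_Ioo

noncomputable def truncEnergy (f : ℝ → ℝ) (u : ℝ) : ℝ :=
  ∫ t in (0:ℝ)..1, max (u - f t) 0 ^ 2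

lemma L2_trunc (f : ℝ → ℝ) (u : ℝ) : L2 f (trunc f u) = √(truncEnergy f u) := by
  refine congrArg _ (intervalIntegral.integral_congr fun t _ ↦ ?_)
  simp only [trunc]
  rcases le_total (f t) u with h | h
  · rw [max_eq_right h, max_eq_left (by linarith)]; ring
  · rw [max_eq_left h, max_eq_right (by linarith)]; ring

lemma rhoM_eq_sSup {ε : ℝ} (hε : 0 ≤ ε) (f : ℝ → ℝ) (M : ℝ) :
    rhoM ε f M = sSup {v | truncEnergy f (M + v) ≤ ε ^ 2} := by
  refine congrArg sSup (Set.ext fun v ↦ ?_)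
  simp only [mem_ofPred_eq, L2_trunc, Real.sqrt_le_left hε]
  exact ⟨fun ⟨u, hv, hu⟩ ↦ by rwa [hv, add_sub_cancel], fun h ↦ ⟨M + v, by ring, h⟩⟩

section TruncEnergy

variable {f : ℝ → ℝ} {m : ℝ}

lemma intervalIntegrable_truncEnergy (hf : ConvexOn ℝ (Icc 0 1) f)
    (hm : ∀ t ∈ Icc (0:ℝ) 1, m ≤ f t) (u : ℝ) :
    IntervalIntegrable (fun t ↦ max (u - f t) 0 ^ 2) volume 0 1 := by
  refine (intervalIntegrable_const (c := max (u - m) 0 ^ 2)).mono_fun ?_ ?_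
  · rw [uIoc_of_le zero_le_one]
    exact ((aestronglyMeasurable_const.sub hf.aestronglyMeasurable_restrict_Ioc).sup
      aestronglyMeasurable_const).pow 2
  · rw [uIoc_of_le zero_le_one]
    filter_upwards [ae_restrict_mem measurableSet_Ioc] with t ht
    have := hm t (Ioc_subset_Icc_self ht)
    simp only [Real.norm_eq_abs, abs_pow, abs_of_nonneg (le_max_right _ (0:ℝ))]
    gcongr

lemma truncEnergy_mono (hf : ConvexOn ℝ (Icc 0 1) f) (hm : ∀ t ∈ Icc (0:ℝ) 1, m ≤ f t) :
    Monotone (truncEnergy f) := fun u u' huu' ↦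
  intervalIntegral.integral_mono_on zero_le_one (intervalIntegrable_truncEnergy hf hm u)
    (intervalIntegrable_truncEnergy hf hm u') fun t _ ↦ by gcongr

lemma truncEnergy_le {z r u : ℝ} (hf : ConvexOn ℝ (Icc 0 1) f)
    (hm : ∀ t ∈ Icc (0:ℝ) 1, m ≤ f t) (hr : 0 ≤ r)
    (hsub : ∀ t ∈ Icc (0:ℝ) 1, f t < u → |t - z| ≤ r) :
    truncEnergy f u ≤ 2 * r * (u - m) ^ 2 := by
  set S := Icc (z - r) (z + r)
  have hS : IntegrableOn (fun _ ↦ (u - m) ^ 2) S := integrableOn_const measure_Icc_lt_top.ne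
  calc truncEnergy f u ≤ ∫ t in (0:ℝ)..1, S.indicator (fun _ ↦ (u - m) ^ 2) t := by
        refine intervalIntegral.integral_mono_on zero_le_one
          (intervalIntegrable_truncEnergy hf hm u) ?_ fun t ht ↦ ?_
        · exact (hS.integrable_indicator measurableSet_Icc).intervalIntegrable
        rcases le_or_gt u (f t) with h | h
        · rw [max_eq_right (by linarith), sq, zero_mul]
          exact indicator_nonneg (fun _ _ ↦ sq_nonneg _) t
        · have htS : t ∈ S := by
            have := abs_le.mp (hsub t ht h)
            exact ⟨by linarith, by linarith⟩
          have := hm t ht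
          rw [indicator_of_mem htS, max_eq_left (by linarith)]
          gcongr
    _ ≤ ∫ t, S.indicator (fun _ ↦ (u - m) ^ 2) t := by
        rw [intervalIntegral.integral_of_le zero_le_one]
        exact setIntegral_le_integral (hS.integrable_indicator measurableSet_Icc)
          (Filter.Eventually.of_forall fun t ↦ indicator_nonneg (fun _ _ ↦ sq_nonneg _) t)
    _ = 2 * r * (u - m) ^ 2 := by
        rw [integral_indicator_const _ measurableSet_Icc, Real.volume_real_Icc,
          max_eq_left (by linarith), smul_eq_mul]
        ring

lemma le_truncEnergy {a b u h : ℝ} (hf : ConvexOn ℝ (Icc 0 1) f)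
    (hm : ∀ t ∈ Icc (0:ℝ) 1, m ≤ f t) (ha : a ∈ Icc (0:ℝ) 1) (hb : b ∈ Icc (0:ℝ) 1)
    (hh : 0 ≤ h) (hab : ∀ t ∈ uIcc a b, f t ≤ u - h) :
    h ^ 2 * |b - a| ≤ truncEnergy f u := by
  have hI := intervalIntegrable_truncEnergy hf hm u
  calc h ^ 2 * |b - a| = ∫ _ in min a b..max a b, h ^ 2 := by
        rw [intervalIntegral.integral_const, max_sub_min_eq_abs, smul_eq_mul, mul_comm]
    _ ≤ ∫ t in min a b..max a b, max (u - f t) 0 ^ 2 := by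
        refine intervalIntegral.integral_mono_on min_le_max intervalIntegrable_const
          (hI.mono_set ?_) fun t ht ↦ ?_
        · rw [uIcc_of_le zero_le_one, uIcc_of_le min_le_max]
          exact Icc_subset_Icc (le_min ha.1 hb.1) (max_le ha.2 hb.2)
        · have := hab t ht
          gcongr
          exact le_max_of_le_left (by linarith)
    _ ≤ truncEnergy f u :=
        intervalIntegral.integral_mono_interval (le_min ha.1 hb.1) min_le_max (max_le ha.2 hb.2)
          (Filter.Eventually.of_forall fun _ ↦ sq_nonneg _) hI

end TruncEnergy

lemma sq_mul_div_rpow {v c s : ℝ} (hv : 0 ≤ v) (hc : 0 < c) (hs : 0 ≤ s) :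
    v ^ 2 * (v / c) ^ s = v ^ (2 + s) / c ^ s := by
  rw [Real.div_rpow hv hc.le, Real.rpow_add' hv (by positivity), Real.rpow_two, mul_div_assoc]

lemma le_div_rpow_inv_of_mul_rpow_le {x v c k : ℝ} (hx : 0 ≤ x) (hc : 0 < c) (hk : 0 < k)
    (h : c * x ^ k ≤ v) : x ≤ (v / c) ^ k⁻¹ := by
  have hv : 0 ≤ v := le_trans (by positivity) h
  rw [Real.le_rpow_inv_iff_of_pos hx (by positivity) hk, le_div_iff₀ hc]
  linarith

lemma sSup_sublevel_mem_Icc {G : ℝ → ℝ} (hG : Monotone G) {c C p v₀ η : ℝ} (hc : 0 < c)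
    (hp : 0 < p) (hv₀ : 0 < v₀) (hlow : ∀ v ∈ Icc 0 v₀, c * v ^ p ≤ G v)
    (hup : ∀ v ∈ Icc 0 v₀, G v ≤ C * v ^ p) (hη : 0 ≤ η) (hηv₀ : η < c * v₀ ^ p) :
    sSup {v | G v ≤ η} ∈ Icc ((η / C) ^ p⁻¹) ((η / c) ^ p⁻¹) := by
  have hv₀p : 0 < v₀ ^ p := by positivity
  have hv₀mem : v₀ ∈ Icc 0 v₀ := ⟨hv₀.le, le_rfl⟩
  have hcC : c ≤ C := le_of_mul_le_mul_right ((hlow v₀ hv₀mem).trans (hup v₀ hv₀mem)) hv₀p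
  have hC : 0 < C := hc.trans_le hcC
  have hbound : ∀ v ∈ {v | G v ≤ η}, v ≤ (η / c) ^ p⁻¹ := by
    intro v hv
    rcases le_or_gt v 0 with hv0 | hv0
    · exact hv0.trans (by positivity)
    have hvv₀ : v ≤ v₀ := by
      by_contra! h
      linarith [hlow v₀ hv₀mem, hG h.le, hv.out]
    exact le_div_rpow_inv_of_mul_rpow_le hv0.le hc hp ((hlow v ⟨hv0.le, hvv₀⟩).trans hv)
  set v₁ := (η / C) ^ p⁻¹
  have hv₁ : v₁ ∈ Icc 0 v₀ := by
    refine ⟨by positivity, (Real.rpow_inv_le_iff_of_pos (by positivity) hv₀.le hp).2 ?_⟩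
    rw [div_le_iff₀ hC]
    nlinarith
  have hmem : v₁ ∈ {v | G v ≤ η} := by
    refine (hup v₁ hv₁).trans_eq ?_
    rw [Real.rpow_inv_rpow (by positivity) hp.ne', mul_div_cancel₀ _ hC.ne']
  exact ⟨le_csSup ⟨_, hbound⟩ hmem, csSup_le ⟨_, hmem⟩ hbound⟩

section PowerGrowth

variable {f : ℝ → ℝ} {z δ c₁ c₂ k : ℝ}

lemma mul_abs_sub_rpow_le_of_sub_lt (hf : ConvexOn ℝ (Icc 0 1) f) (hz : z ∈ Icc (0:ℝ) 1)
    (hc₁ : 0 < c₁) (hδ : 0 < δ)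
    (hlow : ∀ t ∈ Icc (0:ℝ) 1, |t - z| ≤ δ → c₁ * |t - z| ^ k ≤ f t - f z)
    {t : ℝ} (ht : t ∈ Icc (0:ℝ) 1) (hft : f t - f z < c₁ * δ ^ k) :
    c₁ * |t - z| ^ k ≤ f t - f z := by
  have hsphere : ∀ p ∈ Icc (0:ℝ) 1, |p - z| = δ → f z + c₁ * δ ^ k ≤ f p := fun p hp hpz ↦ by
    linarith [hpz ▸ hlow p hp hpz.le]
  have hfz : f z < f z + c₁ * δ ^ k := lt_add_of_pos_right _ (by positivity)
  exact hlow t ht (hf.abs_sub_le_of_lt hz ht hδ.le hsphere hfz (by linarith))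

lemma truncEnergy_le_rpow (hf : ConvexOn ℝ (Icc 0 1) f) (hz : z ∈ Icc (0:ℝ) 1)
    (hm : ∀ t ∈ Icc (0:ℝ) 1, f z ≤ f t) (hc₁ : 0 < c₁) (hk : 0 < k) (hδ : 0 < δ)
    (hlow : ∀ t ∈ Icc (0:ℝ) 1, |t - z| ≤ δ → c₁ * |t - z| ^ k ≤ f t - f z)
    {v : ℝ} (hv : v ∈ Icc 0 (c₁ * δ ^ k)) :
    truncEnergy f (f z + v) ≤ 2 / c₁ ^ k⁻¹ * v ^ (2 + k⁻¹) := by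
  have hsub : ∀ t ∈ Icc (0:ℝ) 1, f t < f z + v → |t - z| ≤ (v / c₁) ^ k⁻¹ := fun t ht hft ↦
    le_div_rpow_inv_of_mul_rpow_le (abs_nonneg _) hc₁ hk
      ((mul_abs_sub_rpow_le_of_sub_lt hf hz hc₁ hδ hlow ht (by linarith [hv.2])).trans
        (by linarith))
  calc truncEnergy f (f z + v) ≤ 2 * (v / c₁) ^ k⁻¹ * (f z + v - f z) ^ 2 :=
        truncEnergy_le hf hm (by have := hv.1; positivity) hsub
    _ = 2 / c₁ ^ k⁻¹ * v ^ (2 + k⁻¹) := by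
        rw [add_sub_cancel_left, mul_assoc, mul_comm _ (_ ^ 2),
          sq_mul_div_rpow hv.1 hc₁ (by positivity)]
        ring

lemma exists_abs_sub_eq_forall_uIcc_sub_le (hz : z ∈ Icc (0:ℝ) 1) (hc₂ : 0 < c₂) (hk : 0 < k)
    (hδ : 0 ≤ δ) (hδ₂ : δ ≤ 1 / 2)
    (hup : ∀ t ∈ Icc (0:ℝ) 1, |t - z| ≤ δ → f t - f z ≤ c₂ * |t - z| ^ k)
    {w : ℝ} (hw : 0 ≤ w) (hwδ : w ≤ c₂ * δ ^ k) :
    ∃ t₀ ∈ Icc (0:ℝ) 1, |t₀ - z| = (w / c₂) ^ k⁻¹ ∧ ∀ t ∈ uIcc z t₀, f t - f z ≤ w := by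
  set r := (w / c₂) ^ k⁻¹
  have hr : 0 ≤ r := by positivity
  have hrδ : r ≤ δ := by
    rwa [Real.rpow_inv_le_iff_of_pos (by positivity) hδ hk, div_le_iff₀ hc₂, mul_comm]
  obtain ⟨t₀, ht₀, ht₀z⟩ := exists_mem_Icc_abs_sub_eq hz hr (hrδ.trans hδ₂)
  refine ⟨t₀, ht₀, ht₀z, fun t ht ↦ ?_⟩
  have htz : |t - z| ≤ r := ht₀z ▸ abs_sub_left_of_mem_uIcc ht
  calc f t - f z ≤ c₂ * |t - z| ^ k := hup t (uIcc_subset_Icc hz ht₀ ht) (htz.trans hrδ)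
    _ ≤ c₂ * r ^ k := by gcongr
    _ = w := by rw [Real.rpow_inv_rpow (by positivity) hk.ne', mul_div_cancel₀ _ hc₂.ne']

lemma rpow_le_truncEnergy (hf : ConvexOn ℝ (Icc 0 1) f) (hz : z ∈ Icc (0:ℝ) 1)
    (hm : ∀ t ∈ Icc (0:ℝ) 1, f z ≤ f t) (hc₂ : 0 < c₂) (hk : 0 < k) (hδ : 0 ≤ δ)
    (hδ₂ : δ ≤ 1 / 2)
    (hup : ∀ t ∈ Icc (0:ℝ) 1, |t - z| ≤ δ → f t - f z ≤ c₂ * |t - z| ^ k)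
    {v : ℝ} (hv : 0 ≤ v) (hvδ : v ≤ 2 * c₂ * δ ^ k) :
    v ^ (2 + k⁻¹) / (2 ^ (2 + k⁻¹) * c₂ ^ k⁻¹) ≤ truncEnergy f (f z + v) := by
  obtain ⟨t₀, ht₀, ht₀z, hnear⟩ :=
    exists_abs_sub_eq_forall_uIcc_sub_le hz hc₂ hk hδ hδ₂ hup (w := v / 2) (by positivity)
      (by linarith)
  calc v ^ (2 + k⁻¹) / (2 ^ (2 + k⁻¹) * c₂ ^ k⁻¹) = (v / 2) ^ 2 * |t₀ - z| := by
        rw [ht₀z, sq_mul_div_rpow (by positivity) hc₂ (by positivity),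
          Real.div_rpow hv zero_le_two, div_div]
    _ ≤ truncEnergy f (f z + v) :=
        le_truncEnergy hf hm hz ht₀ (by positivity) fun t ht ↦ by linarith [hnear t ht]

lemma exists_rhoM_bounds (hf : ConvexOn ℝ (Icc 0 1) f) (hz : z ∈ Icc (0:ℝ) 1)
    (hm : ∀ t ∈ Icc (0:ℝ) 1, f z ≤ f t) (hc₁ : 0 < c₁) (hc₁₂ : c₁ ≤ c₂) (hk : 0 < k)
    (hδ : 0 < δ) (hδ₂ : δ ≤ 1 / 2)
    (hlow : ∀ t ∈ Icc (0:ℝ) 1, |t - z| ≤ δ → c₁ * |t - z| ^ k ≤ f t - f z)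
    (hup : ∀ t ∈ Icc (0:ℝ) 1, |t - z| ≤ δ → f t - f z ≤ c₂ * |t - z| ^ k) :
    ∃ a b ε₀ : ℝ, 0 < a ∧ 0 < b ∧ 0 < ε₀ ∧ ∀ ε : ℝ, 0 < ε → ε ≤ ε₀ →
      rhoM ε f (f z) ∈ Icc (a * ε ^ (2 * k / (2 * k + 1))) (b * ε ^ (2 * k / (2 * k + 1))) ∧
      rhoM ε f (f z) < c₁ * δ ^ k := by
  have hc₂ : 0 < c₂ := hc₁.trans_le hc₁₂
  set p := 2 + k⁻¹ with hp_def
  set c := (2 ^ p * c₂ ^ k⁻¹)⁻¹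
  set C := 2 / c₁ ^ k⁻¹
  set v₀ := c₁ * δ ^ k
  have hp : 0 < p := by positivity
  have hc : 0 < c := by positivity
  have hC : 0 < C := by positivity
  have hv₀ : 0 < v₀ := by positivity
  have hG : Monotone fun v ↦ truncEnergy f (f z + v) := fun _ _ h ↦
    truncEnergy_mono hf hm (by linarith)
  have hGlow : ∀ v ∈ Icc 0 v₀, c * v ^ p ≤ truncEnergy f (f z + v) := fun v hv ↦ by
    rw [inv_mul_eq_div]
    refine rpow_le_truncEnergy hf hz hm hc₂ hk hδ.le hδ₂ hup hv.1 ?_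
    nlinarith [hv.2, Real.rpow_pos_of_pos hδ k]
  have hGup : ∀ v ∈ Icc 0 v₀, truncEnergy f (f z + v) ≤ C * v ^ p := fun v hv ↦
    truncEnergy_le_rpow hf hz hm hc₁ hk hδ hlow hv
  have hq : 2 * k / (2 * k + 1) = 2 * p⁻¹ := by rw [hp_def]; field_simp
  have hscale : ∀ ε D : ℝ, 0 ≤ ε → 0 ≤ D →
      (ε ^ 2 / D) ^ p⁻¹ = D⁻¹ ^ p⁻¹ * ε ^ (2 * k / (2 * k + 1)) := fun ε D hε hD ↦ by
    rw [hq, Real.rpow_mul hε, Real.rpow_two, div_eq_inv_mul,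
      Real.mul_rpow (inv_nonneg.2 hD) (sq_nonneg ε)]
  refine ⟨C⁻¹ ^ p⁻¹, c⁻¹ ^ p⁻¹, √(c * v₀ ^ p) / 2, by positivity, by positivity, by positivity,
    fun ε hε hεε₀ ↦ ?_⟩
  have hη : ε ^ 2 < c * v₀ ^ p := by
    have hX : 0 < c * v₀ ^ p := by positivity
    calc ε ^ 2 ≤ (√(c * v₀ ^ p) / 2) ^ 2 := by gcongr
      _ = c * v₀ ^ p / 4 := by rw [div_pow, Real.sq_sqrt hX.le]; ring
      _ < c * v₀ ^ p := by linarith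
  have hρ := sSup_sublevel_mem_Icc hG hc hp hv₀ hGlow hGup (sq_nonneg ε) hη
  rw [← rhoM_eq_sSup hε.le] at hρ
  refine ⟨by rwa [← hscale ε C hε.le hC.le, ← hscale ε c hε.le hc.le], hρ.2.trans_lt ?_⟩
  rw [Real.rpow_inv_lt_iff_of_pos (by positivity) hv₀.le hp, div_lt_iff₀ hc]
  linarith

lemma sSup_abs_sub_sublevel_mem_Icc (hf : ConvexOn ℝ (Icc 0 1) f) (hz : z ∈ Icc (0:ℝ) 1)
    (hc₁ : 0 < c₁) (hc₁₂ : c₁ ≤ c₂) (hk : 0 < k) (hδ : 0 < δ) (hδ₂ : δ ≤ 1 / 2)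
    (hlow : ∀ t ∈ Icc (0:ℝ) 1, |t - z| ≤ δ → c₁ * |t - z| ^ k ≤ f t - f z)
    (hup : ∀ t ∈ Icc (0:ℝ) 1, |t - z| ≤ δ → f t - f z ≤ c₂ * |t - z| ^ k)
    {ρ : ℝ} (hρ : 0 ≤ ρ) (hρδ : ρ < c₁ * δ ^ k) :
    sSup {v | ∃ t ∈ Icc (0:ℝ) 1, v = |t - z| ∧ f t ≤ ρ + f z} ∈
      Icc ((ρ / c₂) ^ k⁻¹) ((ρ / c₁) ^ k⁻¹) := by
  have hc₂ : 0 < c₂ := hc₁.trans_le hc₁₂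
  have hbound : ∀ v ∈ {v | ∃ t ∈ Icc (0:ℝ) 1, v = |t - z| ∧ f t ≤ ρ + f z},
      v ≤ (ρ / c₁) ^ k⁻¹ := by
    rintro _ ⟨t, ht, rfl, hft⟩
    exact le_div_rpow_inv_of_mul_rpow_le (abs_nonneg _) hc₁ hk
      ((mul_abs_sub_rpow_le_of_sub_lt hf hz hc₁ hδ hlow ht (by linarith)).trans (by linarith))
  obtain ⟨t₀, ht₀, ht₀z, hnear⟩ :=
    exists_abs_sub_eq_forall_uIcc_sub_le hz hc₂ hk hδ.le hδ₂ hup hρ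
      (by nlinarith [Real.rpow_pos_of_pos hδ k])
  have hmem : (ρ / c₂) ^ k⁻¹ ∈ {v | ∃ t ∈ Icc (0:ℝ) 1, v = |t - z| ∧ f t ≤ ρ + f z} :=
    ⟨t₀, ht₀, ht₀z.symm, by linarith [hnear t₀ right_mem_uIcc]⟩
  exact ⟨le_csSup ⟨_, hbound⟩ hmem, csSup_le ⟨_, hmem⟩ hbound⟩

lemma rhoZ_mem_Icc (hf : ConvexOn ℝ (Icc 0 1) f) (hz : z ∈ Icc (0:ℝ) 1)
    (hc₁ : 0 < c₁) (hc₁₂ : c₁ ≤ c₂) (hk : 0 < k) (hδ : 0 < δ) (hδ₂ : δ ≤ 1 / 2)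
    (hlow : ∀ t ∈ Icc (0:ℝ) 1, |t - z| ≤ δ → c₁ * |t - z| ^ k ≤ f t - f z)
    (hup : ∀ t ∈ Icc (0:ℝ) 1, |t - z| ≤ δ → f t - f z ≤ c₂ * |t - z| ^ k)
    {ε a b x : ℝ} (ha : 0 ≤ a) (hb : 0 ≤ b) (hx : 0 ≤ x)
    (hρ : rhoM ε f (f z) ∈ Icc (a * x) (b * x)) (hρδ : rhoM ε f (f z) < c₁ * δ ^ k) :
    rhoZ ε f z (f z) ∈ Icc ((a / c₂) ^ k⁻¹ * x ^ k⁻¹) ((b / c₁) ^ k⁻¹ * x ^ k⁻¹) := by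
  have hc₂ : 0 < c₂ := hc₁.trans_le hc₁₂
  have hρ₀ : 0 ≤ rhoM ε f (f z) := (mul_nonneg ha hx).trans hρ.1
  obtain ⟨hZa, hZb⟩ :=
    sSup_abs_sub_sublevel_mem_Icc hf hz hc₁ hc₁₂ hk hδ hδ₂ hlow hup hρ₀ hρδ
  constructor
  · calc ((a / c₂) ^ k⁻¹ * x ^ k⁻¹) = (a * x / c₂) ^ k⁻¹ := by
          rw [mul_div_right_comm, Real.mul_rpow (by positivity) hx]
      _ ≤ (rhoM ε f (f z) / c₂) ^ k⁻¹ := by gcongr; exact hρ.1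
      _ ≤ rhoZ ε f z (f z) := hZa
  · calc rhoZ ε f z (f z) ≤ (rhoM ε f (f z) / c₁) ^ k⁻¹ := hZb
      _ ≤ (b * x / c₁) ^ k⁻¹ := by gcongr; exact hρ.2
      _ = (b / c₁) ^ k⁻¹ * x ^ k⁻¹ := by
          rw [mul_div_right_comm, Real.mul_rpow (by positivity) hx]

end PowerGrowth

/-- If f behaves like |t - Z(f)|^k near its minimizer, then
ρ_m(ε; f) ≍ ε^(2k/(2k+1)) and ρ_z(ε; f) ≍ ε^(2/(2k+1)) as ε → 0⁺. -/
theorem stmt11 (f : ℝ → ℝ) (z c₁ c₂ k : ℝ)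
    (hf : ConvexOn ℝ (Icc (0:ℝ) 1) f) (hz : UniqueMinOn f z)
    (hc₁ : 0 < c₁) (hc₁₂ : c₁ ≤ c₂) (hk : 1 ≤ k)
    (hloc : ∃ δ > 0, ∀ t ∈ Icc (0:ℝ) 1, |t - z| ≤ δ →
      c₁ * |t - z| ^ k ≤ f t - f z ∧ f t - f z ≤ c₂ * |t - z| ^ k) :
    ∃ A B ε₀ : ℝ, 0 < A ∧ 0 < B ∧ 0 < ε₀ ∧ ∀ ε : ℝ, 0 < ε → ε ≤ ε₀ →
      A * ε ^ ((2*k)/(2*k+1)) ≤ rhoM ε f (f z) ∧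
      rhoM ε f (f z) ≤ B * ε ^ ((2*k)/(2*k+1)) ∧
      A * ε ^ ((2:ℝ)/(2*k+1)) ≤ rhoZ ε f z (f z) ∧
      rhoZ ε f z (f z) ≤ B * ε ^ ((2:ℝ)/(2*k+1)) := by
  obtain ⟨hz01, hzmin⟩ := hz
  have hm : ∀ t ∈ Icc (0:ℝ) 1, f z ≤ f t := fun t ht ↦
    (eq_or_ne t z).elim (fun h ↦ h ▸ le_rfl) fun h ↦ (hzmin t ht h).le
  obtain ⟨δ₁, hδ₁, hloc⟩ := hloc
  -- `δ ≤ 1/2` leaves room for an interval of length `δ` beside `z` inside `[0,1]`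
  set δ := min δ₁ (1 / 2)
  have hδ : 0 < δ := lt_min hδ₁ one_half_pos
  have hlow : ∀ t ∈ Icc (0:ℝ) 1, |t - z| ≤ δ → c₁ * |t - z| ^ k ≤ f t - f z :=
    fun t ht h ↦ (hloc t ht (h.trans (min_le_left _ _))).1
  have hup : ∀ t ∈ Icc (0:ℝ) 1, |t - z| ≤ δ → f t - f z ≤ c₂ * |t - z| ^ k :=
    fun t ht h ↦ (hloc t ht (h.trans (min_le_left _ _))).2
  have hk₀ : 0 < k := zero_lt_one.trans_le hk
  obtain ⟨a, b, ε₀, ha, hb, hε₀, hρ⟩ :=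
    exists_rhoM_bounds hf hz01 hm hc₁ hc₁₂ hk₀ hδ (min_le_right _ _) hlow hup
  refine ⟨min a ((a / c₂) ^ k⁻¹), max b ((b / c₁) ^ k⁻¹), ε₀,
    lt_min ha (by have := hc₁.trans_le hc₁₂; positivity), lt_max_of_lt_left hb, hε₀,
    fun ε hε hεε₀ ↦ ?_⟩
  obtain ⟨hρ, hρδ⟩ := hρ ε hε hεε₀
  have hZ := rhoZ_mem_Icc hf hz01 hc₁ hc₁₂ hk₀ hδ (min_le_right _ _) hlow hup ha.le
    hb.le (by positivity) hρ hρδ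
  rw [← Real.rpow_mul hε.le, show 2 * k / (2 * k + 1) * k⁻¹ = 2 / (2 * k + 1) by field_simp]
    at hZ
  have hq : 0 ≤ ε ^ ((2 * k) / (2 * k + 1)) := by positivity
  have hq' : 0 ≤ ε ^ ((2:ℝ) / (2 * k + 1)) := by positivity
  exact ⟨(mul_le_mul_of_nonneg_right (min_le_left _ _) hq).trans hρ.1,
    hρ.2.trans (mul_le_mul_of_nonneg_right (le_max_left _ _) hq),
    (mul_le_mul_of_nonneg_right (min_le_right _ _) hq').trans hZ.1,
    hZ.2.trans (mul_le_mul_of_nonneg_right (le_max_right _ _) hq')⟩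
end

section
/- Let f, g be convex functions on [0,1], each with a unique minimizer, and suppose ‖f − g‖_2 ≤ ε. Then |M(f) − M(g)| ≤ ρ_m(ε; f) + ρ_m(ε; g) ≤ 2 max{ρ_m(ε; f), ρ_m(ε; g)}; in particular ω_m(ε; f) ≤ 3 ρ_m(ε; f) follows from |M(f) − M(g)| ≤ 3 ρ_m(ε; f) for any such g. -/
/-! Write M = M(f) and m = M(g). Truncating f at a level u that g does not go below moves f
pointwise by no more than g does, so ‖f - f_u‖₂ ≤ ‖f - g‖₂ ≤ ε; with u = m this gives
m - M ≤ ρ_m(ε; f), and symmetrically M - m ≤ ρ_m(ε; g).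

For the factor 3 when m < M, put δ = M - m and truncate f at M + δ/3. Where g ≥ M + δ/3 the
same pointwise comparison applies. On the sublevel set {g < M + δ/3} the truncation error is at
most δ/3, while |f - g| ≥ 2δ/3 on the sublevel set {g < M - 2δ/3}, which by convexity contains
the image of the former under the contraction of ratio 1/4 towards Z(g). As that contraction
divides Lebesgue measure by 4, the squared error on the first set is paid for by ‖f - g‖₂² on
the second. -/

open MeasureTheory Set

lemma L2_eq_sqrt_setIntegral (f g : ℝ → ℝ) :
    L2 f g = √(∫ t in Icc (0:ℝ) 1, (f t - g t) ^ 2) := by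
  rw [L2, intervalIntegral.integral_of_le zero_le_one, integral_Icc_eq_integral_Ioc]

lemma L2_comm (f g : ℝ → ℝ) : L2 f g = L2 g f := by
  simp only [L2, ← neg_sub (f _), neg_sq]

lemma L2_self (f : ℝ → ℝ) : L2 f f = 0 := by
  simp [L2]

lemma sq_sub_max_le_sq_sub {x y u : ℝ} (h : u ≤ y) : (x - max x u) ^ 2 ≤ (x - y) ^ 2 := by
  rcases le_total u x with hux | hxu
  · rw [max_eq_left hux, sub_self]
    exact (zero_pow two_ne_zero).trans_le (sq_nonneg _)
  · rw [max_eq_right hxu]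
    nlinarith

lemma sq_sub_max_le_sq {x u m : ℝ} (hx : m ≤ x) (hu : m ≤ u) :
    (x - max x u) ^ 2 ≤ (u - m) ^ 2 := by
  rcases le_total u x with hux | hxu
  · rw [max_eq_left hux, sub_self]
    exact (zero_pow two_ne_zero).trans_le (sq_nonneg _)
  · rw [max_eq_right hxu]
    nlinarith

lemma UniqueMinOn.le {f : ℝ → ℝ} {z t : ℝ} (h : UniqueMinOn f z) (ht : t ∈ Icc (0:ℝ) 1) :
    f z ≤ f t := by
  rcases eq_or_ne t z with rfl | hne
  exacts [le_rfl, (h.2 t ht hne).le]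

namespace ConvexOn

variable {f g : ℝ → ℝ} {a b : ℝ}

lemma trunc {s : Set ℝ} (hf : ConvexOn ℝ s f) (u : ℝ) : ConvexOn ℝ s (trunc f u) :=
  hf.sup (convexOn_const u hf.1)

/-- The lower bound comes from convexity at the midpoint of `t` and its mirror `a + b - t`. -/
lemma exists_abs_le (hf : ConvexOn ℝ (Icc a b) f) : ∃ C, ∀ t ∈ Icc a b, |f t| ≤ C := by
  refine ⟨max |2 * f ((a + b) / 2) - max (f a) (f b)| |max (f a) (f b)|, fun t ht => ?_⟩
  have hab : a ≤ b := ht.1.trans ht.2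
  have hmax : ∀ t ∈ Icc a b, f t ≤ max (f a) (f b) :=
    fun t ht => hf.le_max_of_mem_Icc (left_mem_Icc.2 hab) (right_mem_Icc.2 hab) ht
  have ht' : a + b - t ∈ Icc a b := ⟨by linarith [ht.2], by linarith [ht.1]⟩
  have hmid := hf.2 ht ht' (by norm_num : (0:ℝ) ≤ 1 / 2) (by norm_num : (0:ℝ) ≤ 1 / 2)
    (by norm_num)
  simp only [smul_eq_mul] at hmid
  rw [show 1 / 2 * t + 1 / 2 * (a + b - t) = (a + b) / 2 by ring] at hmid
  refine abs_le_max_abs_abs ?_ (hmax t ht)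
  linarith [hmax _ ht']

lemma integrableOn_sq_sub (hf : ConvexOn ℝ (Icc a b) f) (hg : ConvexOn ℝ (Icc a b) g) :
    IntegrableOn (fun t => (f t - g t) ^ 2) (Icc a b) := by
  obtain ⟨C, hC⟩ := hf.exists_abs_le
  obtain ⟨D, hD⟩ := hg.exists_abs_le
  have hcont : ContinuousOn (fun t => (f t - g t) ^ 2) (Ioo a b) := by
    have hfc := hf.continuousOn_interior
    have hgc := hg.continuousOn_interior
    rw [interior_Icc] at hfc hgc
    fun_prop
  rw [integrableOn_Icc_iff_integrableOn_Ioo]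
  refine ⟨hcont.aestronglyMeasurable measurableSet_Ioo,
    .restrict_of_bounded (C := (C + D) ^ 2) measure_Ioo_lt_top
      (ae_restrict_of_forall_mem measurableSet_Ioo fun t ht => ?_)⟩
  have ht' := Ioo_subset_Icc_self ht
  rw [Real.norm_eq_abs, abs_pow]
  gcongr
  exact (abs_sub _ _).trans (add_le_add (hC t ht') (hD t ht'))

lemma measureReal_sublevel_le {s : Set ℝ} (hg : ConvexOn ℝ s g) (hs : volume s ≠ ⊤) {z : ℝ}
    (hz : z ∈ s) {c : ℝ} (hc0 : 0 < c) (hc1 : c ≤ 1) (a : ℝ) :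
    volume.real {t ∈ s | g t < a} ≤
      c⁻¹ * volume.real {t ∈ s | g t < (1 - c) * g z + c * a} := by
  set φ : ℝ → ℝ := fun t => (1 - c) * z + c * t
  have hsub : {t ∈ s | g t < a} ⊆ φ ⁻¹' {t ∈ s | g t < (1 - c) * g z + c * a} := by
    rintro t ⟨ht, hgt⟩
    refine ⟨hg.1 hz ht (by linarith) hc0.le (by ring), ?_⟩
    calc g (φ t) ≤ (1 - c) * g z + c * g t := hg.2 hz ht (by linarith) hc0.le (by ring)
      _ < (1 - c) * g z + c * a := by gcongr
  have hφ : ∀ S, volume (φ ⁻¹' S) = ENNReal.ofReal c⁻¹ * volume S := fun S => by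
    rw [show φ = ((1 - c) * z + ·) ∘ (c * ·) from rfl, preimage_comp,
      Real.volume_preimage_mul_left hc0.ne', measure_preimage_add, abs_of_pos (inv_pos.2 hc0)]
  have hfin : volume {t ∈ s | g t < (1 - c) * g z + c * a} ≠ ⊤ :=
    measure_ne_top_of_subset (sep_subset _ _) hs
  have h := ENNReal.toReal_mono (ENNReal.mul_ne_top ENNReal.ofReal_ne_top hfin)
    ((measure_mono hsub).trans_eq (hφ _))
  rwa [ENNReal.toReal_mul, ENNReal.toReal_ofReal (inv_pos.2 hc0).le] at h

end ConvexOn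

variable {f g : ℝ → ℝ}

lemma sub_max_le_L2_trunc (hf : ConvexOn ℝ (Icc 0 1) f) (u : ℝ) :
    u - max (f 0) (f 1) ≤ L2 f (trunc f u) := by
  set c := max (f 0) (f 1)
  rcases le_or_gt u c with huc | hcu
  · linarith [show 0 ≤ L2 f (trunc f u) from Real.sqrt_nonneg _]
  rw [L2_eq_sqrt_setIntegral]
  refine Real.le_sqrt_of_sq_le ?_
  have hpt : ∀ t ∈ Icc (0:ℝ) 1, (u - c) ^ 2 ≤ (f t - trunc f u t) ^ 2 := fun t ht => by
    have hft : f t ≤ c := hf.le_max_of_mem_Icc (left_mem_Icc.2 zero_le_one)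
      (right_mem_Icc.2 zero_le_one) ht
    rw [trunc, max_eq_right (by linarith)]
    nlinarith
  simpa using setIntegral_ge_of_const_le_real measurableSet_Icc (by simp) hpt
    (hf.integrableOn_sq_sub (hf.trunc u))

lemma sub_le_rhoM (hf : ConvexOn ℝ (Icc 0 1) f) {ε u : ℝ} (Mf : ℝ)
    (hu : L2 f (trunc f u) ≤ ε) : u - Mf ≤ rhoM ε f Mf :=
  le_csSup ⟨ε + max (f 0) (f 1) - Mf, by
    rintro _ ⟨u, rfl, hu⟩
    linarith [sub_max_le_L2_trunc hf u]⟩ ⟨u, rfl, hu⟩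

lemma L2_trunc_le_of_le (hf : ConvexOn ℝ (Icc 0 1) f) (hg : ConvexOn ℝ (Icc 0 1) g) {u : ℝ}
    (hu : ∀ t ∈ Icc (0:ℝ) 1, u ≤ g t) : L2 f (trunc f u) ≤ L2 f g := by
  simp only [L2_eq_sqrt_setIntegral]
  exact Real.sqrt_le_sqrt (setIntegral_mono_on (hf.integrableOn_sq_sub (hf.trunc u))
    (hf.integrableOn_sq_sub hg) measurableSet_Icc fun t ht => sq_sub_max_le_sq_sub (hu t ht))

lemma rhoM_nonneg (hf : ConvexOn ℝ (Icc 0 1) f) {z ε : ℝ}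
    (hz : ∀ t ∈ Icc (0:ℝ) 1, f z ≤ f t) (hε : 0 ≤ ε) : 0 ≤ rhoM ε f (f z) :=
  sub_self (f z) ▸ sub_le_rhoM hf (f z)
    ((L2_trunc_le_of_le hf hf hz).trans ((L2_self f).symm ▸ hε))

lemma L2_trunc_add_div_three_le (hf : ConvexOn ℝ (Icc 0 1) f) (hg : ConvexOn ℝ (Icc 0 1) g)
    {M z δ : ℝ} (hM : ∀ t ∈ Icc (0:ℝ) 1, M ≤ f t) (hz : z ∈ Icc (0:ℝ) 1) (hδ : 0 ≤ δ)
    (hgz : g z + δ ≤ M) : L2 f (trunc f (M + δ / 3)) ≤ L2 f g := by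
  set v := M + δ / 3 with hv
  set R := {t ∈ Icc (0:ℝ) 1 | g t < v}
  set R₁ := {t ∈ Icc (0:ℝ) 1 | g t < (1 - 1 / 4) * g z + 1 / 4 * v}
  have hR : MeasurableSet R := (hg.convex_lt v).ordConnected.measurableSet
  have hR₁ : MeasurableSet R₁ := (hg.convex_lt _).ordConnected.measurableSet
  have hRI : Icc 0 1 ∩ R = R := inter_eq_right.2 (sep_subset _ _)
  have hR₁R : R₁ ⊆ R := fun t ht => ⟨ht.1, by linarith [ht.2, hv]⟩
  have hvol : volume.real R ≤ 4 * volume.real R₁ := by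
    have h := hg.measureReal_sublevel_le (by simp) hz (c := 1 / 4) (by norm_num) (by norm_num) v
    rwa [show (1 / 4 : ℝ)⁻¹ = 4 by norm_num] at h
  have hP := hf.integrableOn_sq_sub (hf.trunc v)
  have hD := hf.integrableOn_sq_sub hg
  have h_on_R : ∫ t in R, (f t - trunc f v t) ^ 2 ≤ (δ / 3) ^ 2 * volume.real R := by
    rw [mul_comm, ← smul_eq_mul, ← setIntegral_const]
    refine setIntegral_mono_on (hP.mono_set (sep_subset _ _))
      (integrableOn_const (measure_ne_top_of_subset (sep_subset _ _) (by simp))) hR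
      fun t ht => ?_
    exact (sq_sub_max_le_sq (hM t ht.1) (by linarith)).trans_eq (by rw [hv]; ring)
  have h_off_R : ∫ t in Icc 0 1 \ R, (f t - trunc f v t) ^ 2 ≤
      ∫ t in Icc 0 1 \ R, (f t - g t) ^ 2 :=
    setIntegral_mono_on (hP.mono_set sdiff_subset) (hD.mono_set sdiff_subset)
      (measurableSet_Icc.diff hR) fun t ht =>
        sq_sub_max_le_sq_sub (not_lt.1 fun h => ht.2 ⟨ht.1, h⟩)
  have h_on_R₁ : (2 * δ / 3) ^ 2 * volume.real R₁ ≤ ∫ t in R, (f t - g t) ^ 2 := by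
    refine (setIntegral_ge_of_const_le_real hR₁
      (measure_ne_top_of_subset (sep_subset _ _) (by simp)) (fun t ht => ?_)
      (hD.mono_set (sep_subset _ _))).trans
      (setIntegral_mono_set (hD.mono_set (sep_subset _ _)) (ae_of_all _ fun _ => sq_nonneg _)
        hR₁R.eventuallyLE)
    have : 2 * δ / 3 ≤ f t - g t := by linarith [hM t ht.1, ht.2, hv]
    gcongr
  simp only [L2_eq_sqrt_setIntegral]
  refine Real.sqrt_le_sqrt ?_
  calc ∫ t in Icc 0 1, (f t - trunc f v t) ^ 2
      = (∫ t in R, (f t - trunc f v t) ^ 2) + ∫ t in Icc 0 1 \ R, (f t - trunc f v t) ^ 2 := by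
        rw [← integral_inter_add_sdiff hR hP, hRI]
    _ ≤ (2 * δ / 3) ^ 2 * volume.real R₁ + ∫ t in Icc 0 1 \ R, (f t - g t) ^ 2 := by
        linarith [mul_le_mul_of_nonneg_left hvol (sq_nonneg (δ / 3))]
    _ ≤ (∫ t in R, (f t - g t) ^ 2) + ∫ t in Icc 0 1 \ R, (f t - g t) ^ 2 := by
        gcongr
    _ = ∫ t in Icc 0 1, (f t - g t) ^ 2 := by
        rw [← integral_inter_add_sdiff hR hD, hRI]

theorem stmt14_general (f g : ℝ → ℝ) (zf zg ε : ℝ)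
    (hf : ConvexOn ℝ (Icc (0:ℝ) 1) f) (hg : ConvexOn ℝ (Icc (0:ℝ) 1) g)
    (hzf : UniqueMinOn f zf) (hzg : UniqueMinOn g zg)
    (hfg : L2 f g ≤ ε) :
    |f zf - g zg| ≤ rhoM ε f (f zf) + rhoM ε g (g zg) ∧
    rhoM ε f (f zf) + rhoM ε g (g zg) ≤ 2 * max (rhoM ε f (f zf)) (rhoM ε g (g zg)) ∧
    |f zf - g zg| ≤ 3 * rhoM ε f (f zf) := by
  have hε : 0 ≤ ε := (Real.sqrt_nonneg _).trans hfg
  have hρf := rhoM_nonneg hf (fun _ => hzf.le) hε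
  have hρg := rhoM_nonneg hg (fun _ => hzg.le) hε
  have hmg_sub_mf : g zg - f zf ≤ rhoM ε f (f zf) :=
    sub_le_rhoM hf _ ((L2_trunc_le_of_le hf hg fun _ => hzg.le).trans hfg)
  have hmf_sub_mg : f zf - g zg ≤ rhoM ε g (g zg) :=
    sub_le_rhoM hg _ ((L2_trunc_le_of_le hg hf fun _ => hzf.le).trans (L2_comm f g ▸ hfg))
  refine ⟨abs_le.2 ⟨by linarith, by linarith⟩, ?_, ?_⟩
  · rw [two_mul]
    exact add_le_add (le_max_left _ _) (le_max_right _ _)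
  rcases le_total (g zg) (f zf) with hle | hle
  · have := sub_le_rhoM hf (f zf) ((L2_trunc_add_div_three_le hf hg (fun _ => hzf.le) hzg.1
      (sub_nonneg.2 hle) (by linarith)).trans hfg)
    rw [abs_of_nonneg (sub_nonneg.2 hle)]
    linarith
  · rw [abs_of_nonpos (sub_nonpos.2 hle)]
    linarith

/-- If ‖f - g‖₂ ≤ ε for convex f, g with unique minimizers, then
|M(f) - M(g)| ≤ ρ_m(ε;f) + ρ_m(ε;g) ≤ 2 max{ρ_m(ε;f), ρ_m(ε;g)}, and
|M(f) - M(g)| ≤ 3 ρ_m(ε;f). -/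
theorem stmt14 (f g : ℝ → ℝ) (zf zg ε : ℝ)
    (hf : ConvexOn ℝ (Icc (0:ℝ) 1) f) (hg : ConvexOn ℝ (Icc (0:ℝ) 1) g)
    (hzf : UniqueMinOn f zf) (hzg : UniqueMinOn g zg)
    (hε : 0 < ε) (hfg : L2 f g ≤ ε) :
    |f zf - g zg| ≤ rhoM ε f (f zf) + rhoM ε g (g zg) ∧
    rhoM ε f (f zf) + rhoM ε g (g zg) ≤ 2 * max (rhoM ε f (f zf)) (rhoM ε g (g zg)) ∧
    |f zf - g zg| ≤ 3 * rhoM ε f (f zf) :=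
  stmt14_general f g zf zg ε hf hg hzf hzg hfg
end
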